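/- Let G be a non-Hamiltonian graph on n ≥ 3 vertices possessing a Hamiltonian path v_1, v_2, …, v_n, with x = v_1 and y = v_n. Let S be the set of vertices adjacent to neither x nor y, and let S* = {v_i ∈ S : v_{i−1} y and v_{i+1} x are edges of G}. Then for every v_i ∈ S*, every neighbor of v_i is of the form v_j with either j < i and v_{j+1} ∈ S, or j > i and v_{j−1} ∈ S; moreover S* is an independent set and |N(S*)| ≤ 2|S|, where N(S*) denotes the set of vertices outside S* having a neighbor in S*. -/

import Mathlib

/-!
If `v i ∈ S*` is adjacent to `v j` with `j + 1 < i`, an edge from `v (j + 1)` to `x` or to `y`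
would, together with the edges `v (i - 1) y` and `v (i + 1) x`, turn the path into a Hamiltonian
cycle: rotate the path once (Pósa) and then close it. The case `j > i + 1` is the same argument
on the reversed path. Independence of `S*` follows, since a neighbour `v j ∈ S*` of `v i` would
have `v (j + 1)` (resp. `v (j - 1)`) in `S` but adjacent to `x` (resp. `y`); and `N(S*)` is
covered by the predecessors and the successors of the vertices of `S`.
-/

open SimpleGraph

lemma List.head?_map_Ico {α : Type*} (v : ℕ → α) {a b : ℕ} (h : a < b) :
    ((List.Ico a b).map v).head? = some (v a) := by
  simp [List.Ico.eq_cons h]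

lemma List.getLast?_map_Ico {α : Type*} (v : ℕ → α) {a b : ℕ} (h : a < b) :
    ((List.Ico a b).map v).getLast? = some (v (b - 1)) := by
  obtain ⟨c, rfl⟩ : ∃ c, b = c + 1 := ⟨b - 1, by omega⟩
  simp [List.Ico.succ_top (Nat.le_of_lt_succ h)]

namespace SimpleGraph

variable {V : Type*} {G : SimpleGraph V}

structure IsHamiltonianPathList (G : SimpleGraph V) (l : List V) : Prop where
  nodup : l.Nodup
  mem : ∀ w, w ∈ l
  isChain : l.IsChain G.Adj

namespace IsHamiltonianPathList

variable {l a b : List V}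

lemma reverse (h : G.IsHamiltonianPathList l) : G.IsHamiltonianPathList l.reverse where
  nodup := List.nodup_reverse.2 h.nodup
  mem w := List.mem_reverse.2 (h.mem w)
  isChain := List.isChain_reverse.2 (h.isChain.imp fun _ _ hxy => hxy.symm)

lemma append_reverse (h : G.IsHamiltonianPathList (a ++ b)) {x y : V}
    (hx : a.getLast? = some x) (hy : b.getLast? = some y) (hxy : G.Adj x y) :
    G.IsHamiltonianPathList (a ++ b.reverse) := by
  have hperm : (a ++ b.reverse).Perm (a ++ b) := (List.reverse_perm b).append_left a
  obtain ⟨hca, hcb, -⟩ := List.isChain_append.1 h.isChain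
  refine ⟨hperm.nodup_iff.2 h.nodup, fun w => hperm.mem_iff.2 (h.mem w), ?_⟩
  refine List.isChain_append.2 ⟨hca, List.isChain_reverse.2 (hcb.imp fun _ _ h => h.symm), ?_⟩
  simpa [hx, hy] using hxy

lemma isHamiltonian_of_adj [Fintype V] [DecidableEq V] (h : G.IsHamiltonianPathList l)
    (hlen : 3 ≤ l.length) {x y : V} (hx : l.head? = some x) (hy : l.getLast? = some y)
    (hxy : G.Adj x y) : G.IsHamiltonian := by
  intro _
  have hne : l ≠ [] := by rintro rfl; simp at hlen
  obtain rfl : l.head hne = x := by simpa [List.head?_eq_some_head hne] using hx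
  obtain rfl : l.getLast hne = y := by simpa [List.getLast?_eq_some_getLast hne] using hy
  let p := Walk.ofSupport l hne h.isChain
  have hp : p.IsPath := (Walk.isPath_def _).2 (by simpa [p] using h.nodup)
  refine ⟨_, Walk.cons hxy.symm p, ?_⟩
  rw [Walk.isHamiltonianCycle_iff_isCycle_and_support_count_tail_eq_one]
  refine ⟨(Walk.cons_isCycle_iff p hxy.symm).2 ⟨hp, fun he => ?_⟩, fun w => ?_⟩
  · have := hp.length_eq_one_of_mem_edges (Sym2.eq_swap ▸ he)
    simp [p] at this
    omega
  · simpa [p] using List.count_eq_one_of_mem h.nodup (h.mem w)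

/-- The Hamiltonian cycle is `a ++ b.reverse`. -/
lemma isHamiltonian_of_adj_of_adj [Fintype V] [DecidableEq V]
    (h : G.IsHamiltonianPathList (a ++ b)) (hlen : 3 ≤ (a ++ b).length) {x x' y y' : V}
    (hx : a.head? = some x) (hx' : a.getLast? = some x') (hy : b.head? = some y)
    (hy' : b.getLast? = some y') (hxy : G.Adj x y) (hxy' : G.Adj x' y') : G.IsHamiltonian :=
  (h.append_reverse hx' hy' hxy').isHamiltonian_of_adj (by simpa using hlen)
    (by simp [List.head?_append, hx]) (by simp [List.getLast?_append, hy]) hxy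

end IsHamiltonianPathList

/-- `v 1, …, v n` is a Hamiltonian path of `G` (the values of `v` outside `[1, n]` are junk). -/
structure IsHamiltonianPathSeq (G : SimpleGraph V) (n : ℕ) (v : ℕ → V) : Prop where
  inj : ∀ i j, 1 ≤ i → i ≤ n → 1 ≤ j → j ≤ n → v i = v j → i = j
  surj : ∀ w : V, ∃ i, 1 ≤ i ∧ i ≤ n ∧ v i = w
  adj : ∀ i, 1 ≤ i → i < n → G.Adj (v i) (v (i + 1))

def commonNonNeighbors (G : SimpleGraph V) (x y : V) : Set V :=
  {w | w ≠ x ∧ w ≠ y ∧ ¬G.Adj w x ∧ ¬G.Adj w y}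

lemma commonNonNeighbors_comm (x y : V) :
    G.commonNonNeighbors x y = G.commonNonNeighbors y x := by
  ext w; simp only [commonNonNeighbors, Set.mem_ofPred_eq]; tauto

/-- The set `S*` of the paper, for the Hamiltonian path `v 1, …, v n`. -/
def starSet (G : SimpleGraph V) (n : ℕ) (v : ℕ → V) : Set V :=
  {w | ∃ i, 1 ≤ i ∧ i ≤ n ∧ w = v i ∧ w ∈ G.commonNonNeighbors (v 1) (v n) ∧
    G.Adj (v (i - 1)) (v n) ∧ G.Adj (v (i + 1)) (v 1)}

namespace IsHamiltonianPathSeq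

variable {n : ℕ} {v : ℕ → V}

lemma reverse (h : G.IsHamiltonianPathSeq n v) :
    G.IsHamiltonianPathSeq n (fun k => v (n + 1 - k)) where
  inj i j hi hin hj hjn hij := by
    have := h.inj _ _ (by omega) (by omega) (by omega) (by omega) hij
    omega
  surj w := by
    obtain ⟨i, hi, hin, rfl⟩ := h.surj w
    exact ⟨n + 1 - i, by omega, by omega, by rw [Nat.sub_sub_self (by omega)]⟩
  adj i hi hin := by
    have := (h.adj (n - i) (by omega) (by omega)).symm
    rwa [show n - i + 1 = n + 1 - i by omega, show n - i = n + 1 - (i + 1) by omega] at this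

lemma isHamiltonianPathList (h : G.IsHamiltonianPathSeq n v) :
    G.IsHamiltonianPathList ((List.Ico 1 (n + 1)).map v) where
  nodup := (List.Ico.nodup 1 (n + 1)).map_on fun i hi j hj hij => by
    simp only [List.Ico.mem] at hi hj
    exact h.inj i j hi.1 (by omega) hj.1 (by omega) hij
  mem w := by
    obtain ⟨i, hi, hin, rfl⟩ := h.surj w
    exact List.mem_map_of_mem (List.Ico.mem.2 ⟨hi, by omega⟩)
  isChain := (List.isChain_map v).2 <| (List.Ico.isChain_succ 1 (n + 1)).imp_of_mem_imp
    fun i j hi hj hij => by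
      simp only [List.Ico.mem] at hi hj
      subst hij
      exact h.adj i hi.1 (by omega)

lemma ne_first (h : G.IsHamiltonianPathSeq n v) {i : ℕ} (hi : 1 < i) (hin : i ≤ n) :
    v i ≠ v 1 := fun e => by have := h.inj _ _ (by omega) hin le_rfl (by omega) e; omega

lemma ne_last (h : G.IsHamiltonianPathSeq n v) {i : ℕ} (hi : 1 ≤ i) (hin : i < n) :
    v i ≠ v n := fun e => by have := h.inj _ _ hi hin.le (by omega) le_rfl e; omega

variable [Fintype V] [DecidableEq V]

lemma succ_mem_commonNonNeighbors_of_adj_of_succ_lt (h : G.IsHamiltonianPathSeq n v)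
    (hham : ¬G.IsHamiltonian) {i j : ℕ} (hj : 1 ≤ j) (hji : j + 1 < i) (hin : i < n)
    (hadj : G.Adj (v i) (v j)) (hy : G.Adj (v (i - 1)) (v n)) (hx : G.Adj (v (i + 1)) (v 1)) :
    v (j + 1) ∈ G.commonNonNeighbors (v 1) (v n) := by
  have hP := h.isHamiltonianPathList
  refine ⟨h.ne_first (by omega) (by omega), h.ne_last (by omega) (by omega), fun hc => hham ?_,
    fun hc => hham ?_⟩
  · -- the cycle v 1 … v j, v i … v n, v (i - 1) … v (j + 1)
    rw [← List.Ico.append_consecutive (show 1 ≤ j + 1 by omega) (show j + 1 ≤ n + 1 by omega),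
      ← List.Ico.append_consecutive (show j + 1 ≤ i by omega) (show i ≤ n + 1 by omega),
      List.map_append, List.map_append, ← List.append_assoc] at hP
    have hP' := hP.append_reverse (x := v (i - 1))
      (by simp [List.getLast?_append, List.getLast?_map_Ico v (show j + 1 < i by omega)])
      (List.getLast?_map_Ico v (by omega)) (by simpa using hy)
    rw [List.append_assoc] at hP'
    refine hP'.isHamiltonian_of_adj_of_adj (by simp; omega) (List.head?_map_Ico v (by omega))
      (List.getLast?_map_Ico v (by omega)) ?_ ?_ hc.symm (by simpa using hadj.symm)
    · simp [List.head?_append, List.head?_map_Ico v (show j + 1 < i by omega)]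
    · simp [List.getLast?_append, List.head?_map_Ico v (show i < n + 1 by omega)]
  · -- the cycle v n … v (i + 1), v 1 … v j, v i … v (j + 1)
    rw [← List.Ico.append_consecutive (show 1 ≤ j + 1 by omega) (show j + 1 ≤ n + 1 by omega),
      ← List.Ico.append_consecutive (show j + 1 ≤ i + 1 by omega) (show i + 1 ≤ n + 1 by omega),
      List.map_append, List.map_append] at hP
    have hP' := hP.reverse
    simp only [List.reverse_append, List.append_assoc] at hP'
    have hP'' := hP'.append_reverse (by simp [List.head?_map_Ico v (show i + 1 < n + 1 by omega)])
      (by simp [List.head?_map_Ico v (show 1 < j + 1 by omega)]) hx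
    simp only [List.reverse_append, List.reverse_reverse, ← List.append_assoc] at hP''
    refine hP''.isHamiltonian_of_adj_of_adj (by simp; omega) ?_ ?_
      (List.head?_map_Ico v (by omega)) (List.getLast?_map_Ico v (by omega)) hc.symm
      (by simpa using hadj.symm)
    · simp [List.head?_append, List.getLast?_map_Ico v (show i + 1 < n + 1 by omega)]
    · simp [List.getLast?_append, List.getLast?_map_Ico v (show 1 < j + 1 by omega)]

lemma succ_mem_commonNonNeighbors_of_adj_of_lt (h : G.IsHamiltonianPathSeq n v)
    (hham : ¬G.IsHamiltonian) {i j : ℕ} (hi : v i ∈ G.commonNonNeighbors (v 1) (v n))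
    (hin : i ≤ n) (hy : G.Adj (v (i - 1)) (v n)) (hx : G.Adj (v (i + 1)) (v 1)) (hj : 1 ≤ j)
    (hji : j < i) (hadj : G.Adj (v i) (v j)) :
    v (j + 1) ∈ G.commonNonNeighbors (v 1) (v n) := by
  obtain hji | hji := (show j + 1 ≤ i from hji).eq_or_lt
  · rwa [hji]
  have hin : i < n := hin.lt_of_ne fun e => hi.2.1 (congrArg v e)
  exact h.succ_mem_commonNonNeighbors_of_adj_of_succ_lt hham hj hji hin hadj hy hx

lemma pred_mem_commonNonNeighbors_of_adj_of_lt (h : G.IsHamiltonianPathSeq n v)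
    (hham : ¬G.IsHamiltonian) {i j : ℕ} (hi : v i ∈ G.commonNonNeighbors (v 1) (v n))
    (hi1 : 1 ≤ i) (hy : G.Adj (v (i - 1)) (v n)) (hx : G.Adj (v (i + 1)) (v 1)) (hij : i < j)
    (hjn : j ≤ n) (hadj : G.Adj (v i) (v j)) :
    v (j - 1) ∈ G.commonNonNeighbors (v 1) (v n) := by
  have hi' : n + 1 - (n + 1 - i) = i := by omega
  have hj' : n + 1 - (n + 1 - j) = j := by omega
  have hi_succ : n + 1 - (n + 1 - i - 1) = i + 1 := by omega
  have hi_pred : n + 1 - (n + 1 - i + 1) = i - 1 := by omega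
  have hj_pred : n + 1 - (n + 1 - j + 1) = j - 1 := by omega
  rw [commonNonNeighbors_comm] at hi ⊢
  have key := h.reverse.succ_mem_commonNonNeighbors_of_adj_of_lt hham (i := n + 1 - i)
    (j := n + 1 - j) (by simpa [hi'] using hi) (by omega) (by simpa [hi_succ] using hx)
    (by simpa [hi_pred] using hy) (by omega) (by omega) (by simpa [hi', hj'] using hadj)
  simpa [hj_pred] using key

lemma exists_index_of_mem_starSet_of_adj (h : G.IsHamiltonianPathSeq n v)
    (hham : ¬G.IsHamiltonian) :
    ∀ i, 1 ≤ i → i ≤ n → v i ∈ G.starSet n v → ∀ w, G.Adj (v i) w →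
      ∃ j, 1 ≤ j ∧ j ≤ n ∧ w = v j ∧
        ((j < i ∧ v (j + 1) ∈ G.commonNonNeighbors (v 1) (v n)) ∨
          (i < j ∧ v (j - 1) ∈ G.commonNonNeighbors (v 1) (v n))) := by
  rintro i hi hin ⟨i', hi', hi'n, hvi, hmem, hy, hx⟩ w hw
  obtain rfl := h.inj _ _ hi hin hi' hi'n hvi
  obtain ⟨j, hj, hjn, rfl⟩ := h.surj w
  refine ⟨j, hj, hjn, rfl, ?_⟩
  obtain hji | rfl | hij := lt_trichotomy j i
  · exact .inl ⟨hji, h.succ_mem_commonNonNeighbors_of_adj_of_lt hham hmem hin hy hx hj hji hw⟩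
  · exact (hw.ne rfl).elim
  · exact .inr ⟨hij, h.pred_mem_commonNonNeighbors_of_adj_of_lt hham hmem hi hy hx hij hjn hw⟩

lemma starSet_pairwise_not_adj (h : G.IsHamiltonianPathSeq n v) (hham : ¬G.IsHamiltonian) :
    (G.starSet n v).Pairwise fun a b => ¬G.Adj a b := by
  rintro _ hu w ⟨j', hj', hj'n, rfl, -, hy, hx⟩ - hadj
  obtain ⟨i, hi, hin, rfl, -⟩ := id hu
  obtain ⟨j, hj, hjn, hjj, (⟨-, hS⟩ | ⟨-, hS⟩)⟩ :=
    h.exists_index_of_mem_starSet_of_adj hham i hi hin hu (v j') hadj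
  all_goals obtain rfl := h.inj _ _ hj' hj'n hj hjn hjj
  exacts [hS.2.2.1 hx, hS.2.2.2 hy]

lemma ncard_setOf_adj_starSet_le (h : G.IsHamiltonianPathSeq n v) (hham : ¬G.IsHamiltonian) :
    {w | ∃ u ∈ G.starSet n v, G.Adj u w}.ncard ≤
      2 * (G.commonNonNeighbors (v 1) (v n)).ncard := by
  set S := G.commonNonNeighbors (v 1) (v n)
  choose idx hidx1 hidx2 hidx3 using h.surj
  have hidx : ∀ j, 1 ≤ j → j ≤ n → idx (v j) = j := fun j hj hjn =>
    h.inj _ _ (hidx1 _) (hidx2 _) hj hjn (hidx3 _)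
  have hsub : {w | ∃ u ∈ G.starSet n v, G.Adj u w} ⊆
      (fun w => v (idx w - 1)) '' S ∪ (fun w => v (idx w + 1)) '' S := by
    rintro w ⟨u, hu, huw⟩
    obtain ⟨i, hi, hin, rfl, -⟩ := id hu
    obtain ⟨j, hj, hjn, rfl, ⟨hji, hS⟩ | ⟨hij, hS⟩⟩ :=
      h.exists_index_of_mem_starSet_of_adj hham i hi hin hu w huw
    · exact .inl ⟨_, hS, by simp [hidx (j + 1) (by omega) (by omega)]⟩
    · exact .inr ⟨_, hS, by
        simp [hidx (j - 1) (by omega) (by omega), Nat.sub_add_cancel (by omega : 1 ≤ j)]⟩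
  calc _ ≤ ((fun w => v (idx w - 1)) '' S ∪ (fun w => v (idx w + 1)) '' S).ncard :=
        Set.ncard_le_ncard hsub (Set.toFinite _)
    _ ≤ ((fun w => v (idx w - 1)) '' S).ncard + ((fun w => v (idx w + 1)) '' S).ncard :=
        Set.ncard_union_le _ _
    _ ≤ S.ncard + S.ncard :=
        add_le_add (Set.ncard_image_le (Set.toFinite _)) (Set.ncard_image_le (Set.toFinite _))
    _ = 2 * S.ncard := (two_mul _).symm

end IsHamiltonianPathSeq

end SimpleGraph

theorem stmt_15_general {V : Type*} [Fintype V] [DecidableEq V] {n : ℕ}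
    (G : SimpleGraph V) (hham : ¬ G.IsHamiltonian)
    (v : ℕ → V)
    (hinj : ∀ i j, 1 ≤ i → i ≤ n → 1 ≤ j → j ≤ n → v i = v j → i = j)
    (hsurj : ∀ w : V, ∃ i, 1 ≤ i ∧ i ≤ n ∧ v i = w)
    (hpath : ∀ i, 1 ≤ i → i < n → G.Adj (v i) (v (i + 1)))
    (S Sstar NSstar : Set V)
    (hS : S = {w | w ≠ v 1 ∧ w ≠ v n ∧ ¬ G.Adj w (v 1) ∧ ¬ G.Adj w (v n)})
    (hSstar : Sstar = {w | ∃ i, 1 ≤ i ∧ i ≤ n ∧ w = v i ∧ w ∈ S ∧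
      G.Adj (v (i - 1)) (v n) ∧ G.Adj (v (i + 1)) (v 1)})
    (hNSstar : NSstar = {w | w ∉ Sstar ∧ ∃ u ∈ Sstar, G.Adj u w}) :
    (∀ i, 1 ≤ i → i ≤ n → v i ∈ Sstar → ∀ w, G.Adj (v i) w →
      ∃ j, 1 ≤ j ∧ j ≤ n ∧ w = v j ∧
        ((j < i ∧ v (j + 1) ∈ S) ∨ (i < j ∧ v (j - 1) ∈ S))) ∧
    Sstar.Pairwise (fun a b => ¬ G.Adj a b) ∧
    NSstar.ncard ≤ 2 * S.ncard := by
  subst hS hSstar hNSstar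
  have hP : G.IsHamiltonianPathSeq n v := ⟨hinj, hsurj, hpath⟩
  refine ⟨hP.exists_index_of_mem_starSet_of_adj hham, hP.starSet_pairwise_not_adj hham, ?_⟩
  exact (Set.ncard_le_ncard (fun w hw => hw.2) (Set.toFinite _)).trans
    (hP.ncard_setOf_adj_starSet_le hham)

/-- Let `G` be a non-Hamiltonian graph on `n ≥ 3` vertices possessing a Hamiltonian
path `v_1, v_2, …, v_n`, with `x = v_1` and `y = v_n`. Let `S` be the set of vertices
(other than `x` and `y`) adjacent to neither `x` nor `y`, and let
`S* = {v_i ∈ S : v_{i-1} y and v_{i+1} x are edges of G}`. Then for every `v_i ∈ S*`,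
every neighbor of `v_i` is of the form `v_j` with either `j < i` and `v_{j+1} ∈ S`, or
`j > i` and `v_{j-1} ∈ S`; moreover `S*` is an independent set and `|N(S*)| ≤ 2|S|`,
where `N(S*)` is the set of vertices outside `S*` having a neighbor in `S*`. -/
theorem stmt_15 {V : Type*} [Fintype V] [DecidableEq V] {n : ℕ} (hn : 3 ≤ n)
    (G : SimpleGraph V) (hham : ¬ G.IsHamiltonian)
    (v : ℕ → V)
    (hinj : ∀ i j, 1 ≤ i → i ≤ n → 1 ≤ j → j ≤ n → v i = v j → i = j)
    (hsurj : ∀ w : V, ∃ i, 1 ≤ i ∧ i ≤ n ∧ v i = w)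
    (hpath : ∀ i, 1 ≤ i → i < n → G.Adj (v i) (v (i + 1)))
    (S Sstar NSstar : Set V)
    (hS : S = {w | w ≠ v 1 ∧ w ≠ v n ∧ ¬ G.Adj w (v 1) ∧ ¬ G.Adj w (v n)})
    (hSstar : Sstar = {w | ∃ i, 1 ≤ i ∧ i ≤ n ∧ w = v i ∧ w ∈ S ∧
      G.Adj (v (i - 1)) (v n) ∧ G.Adj (v (i + 1)) (v 1)})
    (hNSstar : NSstar = {w | w ∉ Sstar ∧ ∃ u ∈ Sstar, G.Adj u w}) :
    (∀ i, 1 ≤ i → i ≤ n → v i ∈ Sstar → ∀ w, G.Adj (v i) w →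
      ∃ j, 1 ≤ j ∧ j ≤ n ∧ w = v j ∧
        ((j < i ∧ v (j + 1) ∈ S) ∨ (i < j ∧ v (j - 1) ∈ S))) ∧
    Sstar.Pairwise (fun a b => ¬ G.Adj a b) ∧
    NSstar.ncard ≤ 2 * S.ncard :=
  stmt_15_general G hham v hinj hsurj hpath S Sstar NSstar hS hSstar hNSstar
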